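/- arXiv:2504.18508 — 2 statements merged into one kernel-verified Lean document; each statement's English description precedes it below -/
import Mathlib

section
/- Let G be the graph from the previous construction (K_{k+2} on {r,1,...,k+1}, plus t0 adjacent to 1,...,k+1, plus t_i adjacent to t0 and i). In any spanning tree T of G with dist_T(r,v)=dist_G(r,v) for all v, the vertex t0 is adjacent in T to exactly one vertex among {1,...,k+1}. Consequently, given any family of k spanning trees T^1,...,T^k of G each satisfying this distance-preservation property, there exists an index i ∈ {1,...,k+1} such that for every j, dist_{T^j}(t0,t_i) ≥ 4 > dist_G(t0,t_i) + 2. -/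
/-!
In the gadget, r is at distance 1 from every clique vertex and at distance 2 from t0 and from
every t_i. A spanning tree preserving these distances therefore contains all edges r–i and some
edge j–t0, and, since adjacent vertices of a tree have different distances from r, no
clique–clique edge and no edge t0–t_i. So t0 and every t_i are leaves, and j is unique because
a tree has no 4-cycle r, j, t0, j'. The k trees pick at most k parents of t0, so some i is the
parent in none of them; in each tree the path t0, j, …, i, t_i then has length at least 4, as
i ≠ j are not adjacent in the tree, while t0 and t_i are adjacent in G.
-/

open SimpleGraph

inductive GVtx (k : ℕ) : Type
  | r : GVtx k
  | base : Fin (k + 1) → GVtx k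
  | t0 : GVtx k
  | t : Fin (k + 1) → GVtx k

/-- K_{k+2} on {r, 1, ..., k+1}, plus t0 adjacent to 1,...,k+1,
plus t_i adjacent to t0 and i. -/
def gadgetRel (k : ℕ) : GVtx k → GVtx k → Prop
  | .r, .base _ => True
  | .base _, .base _ => True
  | .t0, .base _ => True
  | .t i, .base j => i = j
  | .t _, .t0 => True
  | _, _ => False

def gadgetG (k : ℕ) : SimpleGraph (GVtx k) := SimpleGraph.fromRel (gadgetRel k)

/-- A spanning tree of `gadgetG k` preserving all distances from the root. -/
def IsFCTree (k : ℕ) (T : SimpleGraph (GVtx k)) : Prop :=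
  T ≤ gadgetG k ∧ T.Connected ∧ T.IsAcyclic ∧
    ∀ v : GVtx k, T.dist .r v = (gadgetG k).dist .r v

namespace SimpleGraph

variable {V : Type*} {G : SimpleGraph V} {u v x : V}

lemma dist_eq_two_iff :
    G.dist u v = 2 ↔ u ≠ v ∧ ¬G.Adj u v ∧ (G.commonNeighbors u v).Nonempty := by
  rw [← edist_eq_two_iff]
  constructor
  · intro h
    rw [← (Reachable.of_dist_ne_zero (by omega)).coe_dist_eq_edist, h]
    rfl
  · intro h
    simp [dist, h]

lemma IsAcyclic.commonNeighbors_subsingleton (hG : G.IsAcyclic) (huv : u ≠ v) :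
    (G.commonNeighbors u v).Subsingleton := by
  intro a ha b hb
  rw [mem_commonNeighbors] at ha hb
  have hpath : ∀ {w} (h₁ : G.Adj u w) (h₂ : G.Adj w v), (Walk.cons h₁ (.cons h₂ .nil)).IsPath :=
    fun h₁ h₂ => by simp [Walk.isPath_def, h₁.ne, h₂.ne, huv]
  have := congrArg (fun p : G.Path u v => p.1.support) <|
    (hG.subsingleton_path u v).elim ⟨_, hpath ha.1 ha.2.symm⟩ ⟨_, hpath hb.1 hb.2.symm⟩
  simpa using this

lemma Reachable.dist_add_one_le_of_forall_adj_eq (hr : G.Reachable u v) (huv : u ≠ v)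
    (hx : ∀ w, G.Adj u w → w = x) : G.dist x v + 1 ≤ G.dist u v := by
  obtain ⟨p, hp⟩ := hr.exists_walk_length_eq_dist
  cases p with
  | nil => exact absurd rfl huv
  | cons h q =>
    obtain rfl := hx _ h
    rw [← hp, Walk.length_cons]
    exact Nat.add_le_add_right (dist_le q) 1

end SimpleGraph

lemma Fintype.exists_forall_ne_of_card_lt {α β : Type*} [Fintype α] [Fintype β]
    (h : Fintype.card α < Fintype.card β) (f : α → β) : ∃ b, ∀ a, f a ≠ b := by
  by_contra! hf
  exact h.not_ge (Fintype.card_le_of_surjective f hf)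

section Gadget

variable {k : ℕ}

lemma gadgetG_adj_r_iff {v : GVtx k} : (gadgetG k).Adj .r v ↔ ∃ m, v = .base m := by
  cases v <;> simp [gadgetG, gadgetRel]

lemma gadgetG_adj_t_iff {v : GVtx k} {i : Fin (k + 1)} :
    (gadgetG k).Adj v (.t i) ↔ v = .base i ∨ v = .t0 := by
  cases v <;> simp [gadgetG, gadgetRel, eq_comm]

lemma gadgetG_adj_t0_iff {v : GVtx k} :
    (gadgetG k).Adj .t0 v ↔ (∃ m, v = .base m) ∨ ∃ m, v = .t m := by
  cases v <;> simp [gadgetG, gadgetRel]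

lemma gadgetG_dist_r_base (i : Fin (k + 1)) : (gadgetG k).dist .r (.base i) = 1 := by
  simp [gadgetG, gadgetRel]

lemma gadgetG_dist_r_t0 : (gadgetG k).dist .r .t0 = 2 :=
  dist_eq_two_iff.mpr ⟨by simp, by simp [gadgetG, gadgetRel],
    .base 0, by simp [gadgetG, gadgetRel, mem_commonNeighbors]⟩

lemma gadgetG_dist_r_t (i : Fin (k + 1)) : (gadgetG k).dist .r (.t i) = 2 :=
  dist_eq_two_iff.mpr ⟨by simp, by simp [gadgetG, gadgetRel],
    .base i, by simp [gadgetG, gadgetRel, mem_commonNeighbors]⟩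

lemma gadgetG_dist_t0_t (i : Fin (k + 1)) : (gadgetG k).dist .t0 (.t i) = 1 := by
  simp [gadgetG, gadgetRel]

end Gadget

namespace IsFCTree

variable {k : ℕ} {T : SimpleGraph (GVtx k)}

lemma le_gadgetG (hT : IsFCTree k T) : T ≤ gadgetG k := hT.1

lemma connected (hT : IsFCTree k T) : T.Connected := hT.2.1

lemma isAcyclic (hT : IsFCTree k T) : T.IsAcyclic := hT.2.2.1

lemma dist_r (hT : IsFCTree k T) (v : GVtx k) : T.dist .r v = (gadgetG k).dist .r v :=
  hT.2.2.2 v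

lemma adj_r_base (hT : IsFCTree k T) (i : Fin (k + 1)) : T.Adj .r (.base i) := by
  rw [← dist_eq_one_iff_adj, hT.dist_r, gadgetG_dist_r_base]

lemma exists_adj_base_of_dist_r_eq_two (hT : IsFCTree k T) {v : GVtx k}
    (hv : (gadgetG k).dist .r v = 2) : ∃ m, T.Adj (.base m) v := by
  obtain ⟨-, -, w, hrw, hvw⟩ := dist_eq_two_iff.mp ((hT.dist_r v).trans hv)
  obtain ⟨m, rfl⟩ := gadgetG_adj_r_iff.mp (hT.le_gadgetG hrw)
  exact ⟨m, hvw.symm⟩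

lemma not_adj_t0_t (hT : IsFCTree k T) (i : Fin (k + 1)) : ¬T.Adj .t0 (.t i) := fun h =>
  hT.isAcyclic.dist_ne_of_adj h (hT.connected _ _) <| by
    rw [hT.dist_r, hT.dist_r, gadgetG_dist_r_t0, gadgetG_dist_r_t]

lemma not_adj_base_base (hT : IsFCTree k T) (i j : Fin (k + 1)) : ¬T.Adj (.base i) (.base j) :=
  fun h => hT.isAcyclic.dist_ne_of_adj h (hT.connected _ _) <| by
    rw [hT.dist_r, hT.dist_r, gadgetG_dist_r_base, gadgetG_dist_r_base]

lemma existsUnique_adj_t0_base (hT : IsFCTree k T) : ∃! j, T.Adj .t0 (.base j) := by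
  obtain ⟨j, hj⟩ := hT.exists_adj_base_of_dist_r_eq_two gadgetG_dist_r_t0
  refine ⟨j, hj.symm, fun m hm => ?_⟩
  have hsub := hT.isAcyclic.commonNeighbors_subsingleton (u := .r) (v := .t0) (by simp)
  simpa using hsub ⟨hT.adj_r_base m, hm⟩ ⟨hT.adj_r_base j, hj.symm⟩

lemma eq_of_adj_t0 (hT : IsFCTree k T) {j : Fin (k + 1)} (hj : T.Adj .t0 (.base j)) {w : GVtx k}
    (hw : T.Adj .t0 w) : w = .base j := by
  obtain ⟨m, rfl⟩ | ⟨m, rfl⟩ := gadgetG_adj_t0_iff.mp (hT.le_gadgetG hw)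
  · rw [hT.existsUnique_adj_t0_base.unique hw hj]
  · exact absurd hw (hT.not_adj_t0_t m)

lemma eq_of_adj_t (hT : IsFCTree k T) {i : Fin (k + 1)} {w : GVtx k} (hw : T.Adj (.t i) w) :
    w = .base i := by
  obtain rfl | rfl := gadgetG_adj_t_iff.mp (hT.le_gadgetG hw.symm)
  · rfl
  · exact absurd hw.symm (hT.not_adj_t0_t i)

lemma four_le_dist_t0_t (hT : IsFCTree k T) {i j : Fin (k + 1)} (hj : T.Adj .t0 (.base j))
    (hij : i ≠ j) : 4 ≤ T.dist .t0 (.t i) := by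
  have hbase : 2 ≤ T.dist (.base i) (.base j) := by
    have h0 : T.dist (.base i) (.base j) ≠ 0 := by
      simp [hij, hT.connected (.base i) (.base j)]
    have h1 : T.dist (.base i) (.base j) ≠ 1 := by
      simpa using hT.not_adj_base_base i j
    omega
  calc 4 ≤ T.dist (.base i) (.base j) + 1 + 1 := by omega
    _ ≤ T.dist (.t i) (.base j) + 1 :=
      Nat.add_le_add_right ((hT.connected _ _).dist_add_one_le_of_forall_adj_eq (by simp)
        fun _ => hT.eq_of_adj_t) 1
    _ = T.dist (.base j) (.t i) + 1 := by rw [dist_comm]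
    _ ≤ T.dist .t0 (.t i) :=
      (hT.connected _ _).dist_add_one_le_of_forall_adj_eq (by simp) fun _ => hT.eq_of_adj_t0 hj

end IsFCTree

/-- In any distance-from-r-preserving spanning tree of the gadget, t0 is adjacent
in the tree to exactly one clique vertex; consequently for any k such trees there is
an index i such that every tree in the family fails to +2-span the pair t0, t_i. -/
theorem stmt3 :
    ∀ k : ℕ, 1 ≤ k →
    (∀ T : SimpleGraph (GVtx k), IsFCTree k T →
      ∃! i : Fin (k + 1), T.Adj .t0 (.base i)) ∧
    (∀ Tf : Fin k → SimpleGraph (GVtx k), (∀ j, IsFCTree k (Tf j)) →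
      ∃ i : Fin (k + 1), ∀ j : Fin k,
        4 ≤ (Tf j).dist .t0 (.t i) ∧ (gadgetG k).dist .t0 (.t i) + 2 < 4) := by
  intro k _
  refine ⟨fun T hT => hT.existsUnique_adj_t0_base, fun Tf hTf => ?_⟩
  choose f hf _ using fun j => (hTf j).existsUnique_adj_t0_base
  obtain ⟨i, hi⟩ := Fintype.exists_forall_ne_of_card_lt (by simp) f
  refine ⟨i, fun j => ⟨(hTf j).four_le_dist_t0_t (hf j) (hi j).symm, ?_⟩⟩
  rw [gadgetG_dist_t0_t]
  omega
end

section
/- Let G be the chain of m ≥ 3 gadgets, where each gadget is K_5 minus an edge xy (with triangle vertices labeled 1,2,3 and x,y universal), chained by identifying the y vertex of each gadget with the x vertex of the next. If T is a spanning tree of G, A, B, C are three gadgets with B strictly between A and C, the restriction of T to each of A,B,C is the same labeled spanning tree of the gadget, and for some i ∈ {1,2,3}, dist_T(A_i, C_i) ≤ dist_G(A_i, C_i) + 1, then T contains both edges {x,i} and {y,i} in each of the gadgets A, B, C. -/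
open SimpleGraph

/-- The chain of m gadgets, each gadget being K_5 minus the edge xy
(triangle vertices 1,2,3 and universal vertices x, y), chained by identifying
the y vertex of each gadget with the x vertex of the next. The "joints"
(x/y vertices) are `Sum.inl a` for `a : Fin (m+1)`; the triangle vertices of
gadget g are `Sum.inr (g, i)`. -/
def chainRel (m : ℕ) :
    (Fin (m + 1) ⊕ Fin m × Fin 3) → (Fin (m + 1) ⊕ Fin m × Fin 3) → Prop
  | .inl a, .inr (g, _) => (a : ℕ) = (g : ℕ) ∨ (a : ℕ) = (g : ℕ) + 1
  | .inr (g, _), .inr (g', _) => g = g'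
  | _, _ => False

def chainG (m : ℕ) : SimpleGraph (Fin (m + 1) ⊕ Fin m × Fin 3) :=
  SimpleGraph.fromRel (chainRel m)

/-- The five vertices of gadget g, indexed as 0 = x, 1, 2, 3 = triangle, 4 = y. -/
def gvx (m : ℕ) (g : Fin m) : Fin 5 → (Fin (m + 1) ⊕ Fin m × Fin 3) :=
  ![Sum.inl g.castSucc, Sum.inr (g, 0), Sum.inr (g, 1), Sum.inr (g, 2), Sum.inl g.succ]

/-!
Give the joint `j` level `2j` and the triangle vertices of gadget `g` level `2g + 1`. Adjacent
vertices differ in level by at most one, so every walk meets every intermediate joint: joints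
are cut vertices, `T`-distances add up along the chain, and each joint-to-joint stretch costs
at least 2. Against the chain distance `2(c - a)` between `A_i` and `C_i` this leaves slack
one, so `dist_T(A_i, y_A) + dist_T(x_B, y_B) + dist_T(x_C, C_i) ≤ 5`. If both outer terms are 1,
the edges `A_i y_A` and `x_C C_i` exist and are copied to all three gadgets. Otherwise
`dist_T(x_B, y_B) = 2`, and copying into `A` the middle vertex of that path and the edges
forced by the outer terms yields `dist_T(x_A, y_A) ≤ 2` beside a path of length 3 from `x_A` to
`y_A`, impossible in a tree.
-/

namespace SimpleGraph

variable {V : Type*} {G : SimpleGraph V} {u v w x y s t : V}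

theorem Walk.exists_mem_support_apply_eq (f : V → ℕ)
    (hf : ∀ ⦃a b⦄, G.Adj a b → f b ≤ f a + 1) (p : G.Walk u w)
    {n : ℕ} (hu : f u ≤ n) (hw : n ≤ f w) : ∃ v ∈ p.support, f v = n := by
  induction p with
  | nil => exact ⟨_, List.mem_singleton_self _, le_antisymm hu hw⟩
  | cons h p ih =>
    rcases hu.eq_or_lt with hu | hu
    · exact ⟨_, List.mem_cons_self, hu⟩
    · obtain ⟨v, hv, hfv⟩ := ih (by have := hf h; omega) hw
      exact ⟨v, List.mem_cons_of_mem _ hv, hfv⟩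

theorem Walk.apply_le_apply_add_length (f : V → ℕ)
    (hf : ∀ ⦃a b⦄, G.Adj a b → f b ≤ f a + 1) (p : G.Walk u w) :
    f w ≤ f u + p.length := by
  induction p with
  | nil => simp
  | cons h p ih => have := hf h; rw [Walk.length_cons]; omega

theorem Reachable.apply_le_apply_add_dist (f : V → ℕ)
    (hf : ∀ ⦃a b⦄, G.Adj a b → f b ≤ f a + 1) (h : G.Reachable u w) :
    f w ≤ f u + G.dist u w := by
  obtain ⟨p, hp⟩ := h.exists_walk_length_eq_dist
  exact hp ▸ p.apply_le_apply_add_length f hf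

theorem Reachable.dist_eq_add_of_forall_mem_support (huw : G.Reachable u w)
    (h : ∀ p : G.Walk u w, v ∈ p.support) : G.dist u w = G.dist u v + G.dist v w := by
  classical
  obtain ⟨p, hp⟩ := huw.exists_walk_length_eq_dist
  refine le_antisymm ((p.takeUntil v (h p)).reachable.dist_triangle_left w) ?_
  calc G.dist u v + G.dist v w
      ≤ (p.takeUntil v (h p)).length + (p.dropUntil v (h p)).length :=
        add_le_add (dist_le _) (dist_le _)
    _ = G.dist u w := by rw [← Walk.length_append, p.take_spec, hp]

theorem exists_adj_adj_of_dist_eq_two (h : G.dist u v = 2) : ∃ w, G.Adj u w ∧ G.Adj w v := by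
  have hr : G.Reachable u v := Reachable.of_dist_ne_zero (by omega)
  obtain ⟨-, -, w, hw⟩ := edist_eq_two_iff.mp (by rw [← hr.coe_dist_eq_edist, h]; rfl)
  rw [mem_commonNeighbors] at hw
  exact ⟨w, hw.1, hw.2.symm⟩

theorem IsAcyclic.length_eq_dist_of_isPath (hG : G.IsAcyclic) {p : G.Walk u v} (hp : p.IsPath) :
    p.length = G.dist u v := by
  obtain ⟨q, hq, hqd⟩ := p.reachable.exists_path_of_dist
  rw [← hqd]
  exact congrArg (fun r : G.Path u v => r.1.length)
    ((hG.subsingleton_path u v).elim ⟨p, hp⟩ ⟨q, hq⟩)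

theorem IsAcyclic.dist_eq_three (hG : G.IsAcyclic) (hxy : x ≠ y) (hn : ¬ G.Adj x y)
    (hxs : G.Adj x s) (hst : G.Adj s t) (hty : G.Adj t y) : G.dist x y = 3 := by
  have hxt : x ≠ t := by rintro rfl; exact hn hty
  have hsy : s ≠ y := by rintro rfl; exact hn hxs
  refine (hG.length_eq_dist_of_isPath (p := .cons hxs (.cons hst (.cons hty .nil))) ?_).symm
  simp [Walk.isPath_def, hxs.ne, hst.ne, hty.ne, hxt, hsy, hxy]

end SimpleGraph

abbrev ChainVertex (m : ℕ) : Type := Fin (m + 1) ⊕ Fin m × Fin 3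

namespace ChainVertex

variable {m : ℕ} {T : SimpleGraph (ChainVertex m)} {u v w : ChainVertex m}

@[simp]
theorem chainG_adj_inl_inl (j k : Fin (m + 1)) : ¬ (chainG m).Adj (.inl j) (.inl k) := by
  simp [chainG, chainRel]

@[simp]
theorem chainG_adj_inl_inr (j : Fin (m + 1)) (g : Fin m) (s : Fin 3) :
    (chainG m).Adj (.inl j) (.inr (g, s)) ↔ (j : ℕ) = g ∨ (j : ℕ) = g + 1 := by
  simp [chainG, chainRel]

@[simp]
theorem chainG_adj_inr_inl (g : Fin m) (s : Fin 3) (j : Fin (m + 1)) :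
    (chainG m).Adj (.inr (g, s)) (.inl j) ↔ (j : ℕ) = g ∨ (j : ℕ) = g + 1 := by
  rw [adj_comm, chainG_adj_inl_inr]

@[simp]
theorem chainG_adj_inr_inr (g h : Fin m) (s t : Fin 3) :
    (chainG m).Adj (.inr (g, s)) (.inr (h, t)) ↔ g = h ∧ s ≠ t := by
  simp only [chainG, chainRel, fromRel_adj, ne_eq, Sum.inr.injEq, Prod.mk.injEq, not_and,
    eq_comm (a := h), or_self]
  tauto

def level : ChainVertex m → ℕ := Sum.elim (fun j => 2 * j) (fun p => 2 * p.1 + 1)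

theorem level_le_of_adj (h : (chainG m).Adj u v) : level v ≤ level u + 1 := by
  rcases u with j | ⟨g, s⟩ <;> rcases v with k | ⟨g', s'⟩ <;> simp_all [level] <;> omega

theorem eq_inl_of_level_eq {k : Fin (m + 1)} (h : level v = 2 * k) : v = .inl k := by
  rcases v with j | ⟨g, s⟩ <;> simp only [level, Sum.elim_inl, Sum.elim_inr] at h
  · exact congrArg _ (Fin.ext (by omega))
  · omega

theorem level_le_add_dist (hT : T ≤ chainG m) (hc : T.Connected) (u w : ChainVertex m) :
    level w ≤ level u + T.dist u w :=
  (hc u w).apply_le_apply_add_dist _ fun _ _ h => level_le_of_adj (hT h)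

theorem dist_eq_add_dist_inl (hT : T ≤ chainG m) (hc : T.Connected) {k : Fin (m + 1)}
    (hu : level u ≤ 2 * k) (hw : 2 * k ≤ level w) :
    T.dist u w = T.dist u (.inl k) + T.dist (.inl k) w :=
  (hc u w).dist_eq_add_of_forall_mem_support fun p => by
    obtain ⟨v, hv, hlev⟩ :=
      p.exists_mem_support_apply_eq level (fun _ _ h => level_le_of_adj (hT h)) hu hw
    rwa [eq_inl_of_level_eq hlev] at hv

theorem chainG_dist_inr_inr_le (i : Fin 3) {a c : Fin m} (h : (a : ℕ) ≤ c) :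
    (chainG m).dist (.inr (a, i)) (.inr (c, i)) ≤ 2 * (c - a : ℕ) := by
  obtain ⟨n, hn⟩ := Nat.exists_eq_add_of_le h
  induction n generalizing c with
  | zero => simp [Fin.ext (hn.trans (add_zero _))]
  | succ n ih =>
    let c' : Fin m := ⟨a + n, by omega⟩
    let step : (chainG m).Walk (.inr (c', i)) (.inr (c, i)) :=
      .cons (v := .inl c'.succ) (by simp) (.cons (by simp [c']; omega) .nil)
    calc (chainG m).dist (.inr (a, i)) (.inr (c, i))
        ≤ (chainG m).dist (.inr (a, i)) (.inr (c', i)) +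
            (chainG m).dist (.inr (c', i)) (.inr (c, i)) :=
          step.reachable.dist_triangle_right _
      _ ≤ 2 * n + 2 :=
          add_le_add (by simpa [c'] using ih (c := c') (by simp [c']) rfl) (dist_le step)
      _ = 2 * (c - a : ℕ) := by omega

theorem gvx_zero (g : Fin m) : gvx m g 0 = .inl g.castSucc := rfl

theorem gvx_four (g : Fin m) : gvx m g 4 = .inl g.succ := rfl

theorem gvx_tri (g : Fin m) (i : Fin 3) : gvx m g i.succ.castSucc = .inr (g, i) := by
  fin_cases i <;> rfl

theorem exists_eq_gvx_of_adj_of_adj {g : Fin m} {p q : Fin 5} {v : ChainVertex m} (hpq : p ≠ q)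
    (hp : (chainG m).Adj (gvx m g p) v) (hq : (chainG m).Adj v (gvx m g q)) :
    ∃ r, v = gvx m g r := by
  rcases v with j | ⟨h, s⟩
  · have hj : (j : ℕ) = g ∨ (j : ℕ) = g + 1 := by fin_cases p <;> simp_all [gvx]
    rcases hj with hj | hj
    · exact ⟨0, congrArg _ (Fin.ext hj)⟩
    · exact ⟨4, congrArg _ (Fin.ext hj)⟩
  · by_cases hh : h = g
    · exact ⟨s.succ.castSucc, by rw [gvx_tri, hh]⟩
    · have hh' : (h : ℕ) ≠ g := Fin.val_ne_of_ne hh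
      fin_cases p <;> fin_cases q <;> simp [gvx, hh, Ne.symm hh] at hp hq hpq <;> omega

theorem exists_adj_gvx_of_dist_eq_two (hT : T ≤ chainG m) {g : Fin m} {p q : Fin 5}
    (h : T.dist (gvx m g p) (gvx m g q) = 2) :
    ∃ r, T.Adj (gvx m g p) (gvx m g r) ∧ T.Adj (gvx m g r) (gvx m g q) := by
  obtain ⟨v, hpv, hvq⟩ := exists_adj_adj_of_dist_eq_two h
  have hpq : p ≠ q := by rintro rfl; simp at h
  obtain ⟨r, rfl⟩ := exists_eq_gvx_of_adj_of_adj hpq (hT hpv) (hT hvq)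
  exact ⟨r, hpv, hvq⟩

theorem dist_gvx_zero_four_eq_three (hT : T ≤ chainG m) (hacy : T.IsAcyclic) {g : Fin m}
    {r s : Fin 5} (h0r : T.Adj (gvx m g 0) (gvx m g r)) (hrs : T.Adj (gvx m g r) (gvx m g s))
    (hs4 : T.Adj (gvx m g s) (gvx m g 4)) : T.dist (gvx m g 0) (gvx m g 4) = 3 :=
  hacy.dist_eq_three (by simp [gvx, Fin.ext_iff]) (fun h => chainG_adj_inl_inl _ _ (hT h))
    h0r hrs hs4

theorem gadget_dist_bounds (hT : T ≤ chainG m) (hc : T.Connected) {a b c : Fin m}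
    (hab : (a : ℕ) < b) (hbc : (b : ℕ) < c) {i : Fin 3}
    (hdist : T.dist (gvx m a i.succ.castSucc) (gvx m c i.succ.castSucc) ≤
      (chainG m).dist (gvx m a i.succ.castSucc) (gvx m c i.succ.castSucc) + 1) :
    1 ≤ T.dist (gvx m a i.succ.castSucc) (gvx m a 4) ∧ 2 ≤ T.dist (gvx m b 0) (gvx m b 4) ∧
      1 ≤ T.dist (gvx m c 0) (gvx m c i.succ.castSucc) ∧
      T.dist (gvx m a i.succ.castSucc) (gvx m a 4) + T.dist (gvx m b 0) (gvx m b 4) +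
        T.dist (gvx m c 0) (gvx m c i.succ.castSucc) ≤ 5 := by
  simp only [gvx_zero, gvx_four, gvx_tri] at hdist ⊢
  have hG := chainG_dist_inr_inr_le i (a := a) (c := c) (by omega)
  have hsplit := fun u k w => dist_eq_add_dist_inl hT hc (u := u) (k := k) (w := w)
  have h1 := hsplit (.inr (a, i)) a.succ (.inr (c, i)) (by simp [level]) (by simp [level]; omega)
  have h2 := hsplit (.inl a.succ) b.castSucc (.inr (c, i)) (by simp [level]; omega)
    (by simp [level]; omega)
  have h3 := hsplit (.inl b.castSucc) b.succ (.inr (c, i)) (by simp [level])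
    (by simp [level]; omega)
  have h4 := hsplit (.inl b.succ) c.castSucc (.inr (c, i)) (by simp [level]; omega)
    (by simp [level])
  have hlev := level_le_add_dist hT hc
  have l1 := hlev (.inr (a, i)) (.inl a.succ)
  have l2 := hlev (.inl a.succ) (.inl b.castSucc)
  have l3 := hlev (.inl b.castSucc) (.inl b.succ)
  have l4 := hlev (.inl b.succ) (.inl c.castSucc)
  have l5 := hlev (.inl c.castSucc) (.inr (c, i))
  simp only [level, Sum.elim_inl, Sum.elim_inr, Fin.val_succ, Fin.val_castSucc] at l1 l2 l3 l4 l5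
  omega

end ChainVertex

open ChainVertex

/-- If the restriction of a spanning tree T to three gadgets A, B, C (with B between
A and C) is the same labeled spanning tree, and T provides a 1-approximating path
between A_i and C_i, then T contains the edges {x,i} and {y,i} in all of A, B, C. -/
theorem stmt6 :
    ∀ m : ℕ, 3 ≤ m →
    ∀ T : SimpleGraph (Fin (m + 1) ⊕ Fin m × Fin 3),
      T ≤ chainG m → T.Connected → T.IsAcyclic →
    ∀ a b c : Fin m, (a : ℕ) < (b : ℕ) → (b : ℕ) < (c : ℕ) →
      (∀ p q : Fin 5, T.Adj (gvx m a p) (gvx m a q) ↔ T.Adj (gvx m b p) (gvx m b q)) →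
      (∀ p q : Fin 5, T.Adj (gvx m a p) (gvx m a q) ↔ T.Adj (gvx m c p) (gvx m c q)) →
    ∀ i : Fin 3,
      T.dist (gvx m a i.succ.castSucc) (gvx m c i.succ.castSucc) ≤
        (chainG m).dist (gvx m a i.succ.castSucc) (gvx m c i.succ.castSucc) + 1 →
      ∀ g ∈ ({a, b, c} : Set (Fin m)),
        T.Adj (gvx m g 0) (gvx m g i.succ.castSucc) ∧
        T.Adj (gvx m g 4) (gvx m g i.succ.castSucc) := by
  intro m _ T hT hc hacy a b c hab hbc hsameB hsameC i hdist
  obtain ⟨hα, hL, hγ, hsum⟩ := gadget_dist_bounds hT hc hab hbc hdist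
  set t : Fin 5 := i.succ.castSucc
  by_cases h11 : T.dist (gvx m a t) (gvx m a 4) = 1 ∧ T.dist (gvx m c 0) (gvx m c t) = 1
  · have hya := dist_eq_one_iff_adj.mp h11.1
    have hxc := dist_eq_one_iff_adj.mp h11.2
    have hxa := (hsameC 0 t).mpr hxc
    rintro g (rfl | rfl | rfl)
    · exact ⟨hxa, hya.symm⟩
    · exact ⟨(hsameB 0 t).mp hxa, ((hsameB t 4).mp hya).symm⟩
    · exact ⟨hxc, ((hsameC t 4).mp hya).symm⟩
  exfalso
  have hA_le : T.dist (gvx m a 0) (gvx m a 4) ≤ 2 := by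
    obtain ⟨r, h0r, hr4⟩ :=
      exists_adj_gvx_of_dist_eq_two hT (by omega : T.dist (gvx m b 0) (gvx m b 4) = 2)
    exact dist_le (.cons ((hsameB 0 r).mpr h0r) (.cons ((hsameB r 4).mpr hr4) .nil))
  have hA_eq : T.dist (gvx m a 0) (gvx m a 4) = 3 := by
    rcases (by omega : T.dist (gvx m a t) (gvx m a 4) = 1 ∧ T.dist (gvx m c 0) (gvx m c t) = 2 ∨
        T.dist (gvx m a t) (gvx m a 4) = 2 ∧ T.dist (gvx m c 0) (gvx m c t) = 1)
      with ⟨hα1, hγ2⟩ | ⟨hα2, hγ1⟩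
    · obtain ⟨r, h0r, hrt⟩ := exists_adj_gvx_of_dist_eq_two hT hγ2
      exact dist_gvx_zero_four_eq_three hT hacy ((hsameC 0 r).mpr h0r) ((hsameC r t).mpr hrt)
        (dist_eq_one_iff_adj.mp hα1)
    · obtain ⟨r, htr, hr4⟩ := exists_adj_gvx_of_dist_eq_two hT hα2
      exact dist_gvx_zero_four_eq_three hT hacy ((hsameC 0 t).mpr (dist_eq_one_iff_adj.mp hγ1))
        htr hr4
  omega
end
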